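/- Assume: (i) Ψ(γ) = lim (1/t) E^γ[log Z_t] exists for all admissible γ and Ψ(γ^ρ) = log ρ + Ψ(γ); (ii) Ψ(γ) < 0 implies almost sure extinction under P^γ; (iii) positive survival probability under P^γ implies there exists ρ ∈ (0,1) with positive survival probability under P^{γ^ρ}. Then Ψ(γ) = 0 implies P^γ(survival) = 0. -/
import Mathlib


/-- The critical BRWRE dies out, deduced from: (i) the perturbation identity
`Ψ(γ^ρ) = log ρ + Ψ(γ)`; (ii) subcritical extinction (`Ψ(γ) < 0` implies no survival);
(iii) openness of survival under small perturbation (if survival has positive probability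
under `γ`, then also under `γ^ρ` for some `ρ ∈ (0,1)`). Then `Ψ(γ) = 0` implies that the
BRWRE does not survive. -/
theorem stmt_18 {Γ : Type*} (Ψ : Γ → ℝ) (surv : Γ → Prop) (pert : Γ → ℝ → Γ)
    (h1 : ∀ γ : Γ, ∀ ρ ∈ Set.Ioc (0 : ℝ) 1, Ψ (pert γ ρ) = Real.log ρ + Ψ γ)
    (h2 : ∀ γ : Γ, Ψ γ < 0 → ¬ surv γ)
    (h3 : ∀ γ : Γ, surv γ → ∃ ρ ∈ Set.Ioo (0 : ℝ) 1, surv (pert γ ρ))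
    (γ : Γ) (h0 : Ψ γ = 0) : ¬ surv γ := by
  intro hs
  obtain ⟨ρ, ⟨hρ0, hρ1⟩, hsp⟩ := h3 γ hs
  exact h2 _ (by
    rw [h1 γ ρ ⟨hρ0, le_of_lt hρ1⟩, h0, add_zero]
    exact Real.log_neg hρ0 hρ1) hsp
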